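/- arXiv:math/9910062 — 5 statements merged into one kernel-verified Lean document; each statement's English description precedes it below -/
import Mathlib

section
/- Let P_1, P_2 be probability mass functions on a finite set A with P_2(a) > 0 for all a. For any sequence of decision regions C_n ⊆ A^n, if the type-I error probabilities α_n = P_1^n(C_n^c) → 0 as n → ∞, then liminf_{n→∞} (1/n) log P_2^n(C_n) ≥ -H(P_1‖P_2). -/
/-!
Split the `n`-fold product space along `C n`. The log-sum inequality on `C n`, together with
`a - b ≤ a log (a / b)` on its complement, bounds `pₙ log (pₙ / qₙ)` by
`H(P₁ⁿ‖P₂ⁿ) + 1 = n H(P₁‖P₂) + 1`, where `pₙ = P₁ⁿ(C n)` and `qₙ = P₂ⁿ(C n)`. Since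
`pₙ log pₙ ≥ -1`, this gives `(1/n) log qₙ ≥ -(H(P₁‖P₂) + 2/n) / pₙ`, and `pₙ → 1`.
-/

open Finset Real Filter Topology

noncomputable def relEntropy {X : Type*} [Fintype X] (a b : X → ℝ) : ℝ :=
  ∑ x, a x * log (a x / b x)

theorem sub_le_mul_log_div {a b : ℝ} (ha : 0 ≤ a) (hb : 0 < b) : a - b ≤ a * log (a / b) := by
  rcases ha.eq_or_lt with rfl | ha
  · simp [hb.le]
  · calc a - b = a * (1 - (a / b)⁻¹) := by field_simp
      _ ≤ a * log (a / b) :=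
        mul_le_mul_of_nonneg_left (one_sub_inv_le_log_of_pos (by positivity)) ha.le

section LogSum

variable {X : Type*} {a b : X → ℝ}

theorem Finset.sum_mul_log_div_le_sum_mul_log_div (s : Finset X) (ha : ∀ x ∈ s, 0 ≤ a x)
    (hb : ∀ x ∈ s, 0 < b x) :
    (∑ x ∈ s, a x) * log ((∑ x ∈ s, a x) / ∑ x ∈ s, b x) ≤ ∑ x ∈ s, a x * log (a x / b x) := by
  set A := ∑ x ∈ s, a x
  set B := ∑ x ∈ s, b x
  rcases (sum_nonneg ha).eq_or_lt with hA | hA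
  · have hzero : ∀ x ∈ s, a x = 0 := (sum_eq_zero_iff_of_nonneg ha).mp hA.symm
    rw [show A = 0 from hA.symm, zero_mul]
    exact (sum_eq_zero fun x hx => by simp [hzero x hx]).ge
  have hB : 0 < B := sum_pos hb (nonempty_of_sum_ne_zero hA.ne')
  -- Compare `a` with the rescaled `(A / B) • b`, which has the same total mass.
  have hpoint : ∀ x ∈ s, a x - A / B * b x ≤ a x * log (a x / b x) - a x * log (A / B) := by
    intro x hx
    have := sub_le_mul_log_div (ha x hx) (mul_pos (div_pos hA hB) (hb x hx))
    rcases (ha x hx).eq_or_lt with hax | hax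
    · simpa [← hax] using this
    rwa [div_mul_eq_div_div_swap, log_div (div_pos hax (hb x hx)).ne' (div_pos hA hB).ne',
      mul_sub] at this
  have := sum_le_sum hpoint
  rw [sum_sub_distrib, sum_sub_distrib, ← mul_sum, ← sum_mul, div_mul_cancel₀ _ hB.ne'] at this
  linarith

variable [Fintype X]

theorem neg_relEntropy_sub_two_le_mul_log (ha : ∀ x, 0 ≤ a x) (hb : ∀ x, 0 < b x)
    (hb1 : ∑ x, b x = 1) (C : Finset X) (hC : 0 < ∑ x ∈ C, a x) :
    -relEntropy a b - 2 ≤ (∑ x ∈ C, a x) * log (∑ x ∈ C, b x) := by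
  classical
  set p := ∑ x ∈ C, a x
  set q := ∑ x ∈ C, b x
  have hq : 0 < q := sum_pos (fun x _ => hb x) (nonempty_of_sum_ne_zero hC.ne')
  have hin : p * log (p / q) ≤ ∑ x ∈ C, a x * log (a x / b x) :=
    C.sum_mul_log_div_le_sum_mul_log_div (fun x _ => ha x) (fun x _ => hb x)
  have hout : -1 ≤ ∑ x ∈ Cᶜ, a x * log (a x / b x) := by
    calc -1 ≤ ∑ x ∈ Cᶜ, (a x - b x) := by
          rw [sum_sub_distrib, ← hb1]
          linarith [sum_nonneg fun x (_ : x ∈ Cᶜ) => ha x,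
            sum_le_univ_sum_of_nonneg (s := Cᶜ) fun x => (hb x).le]
      _ ≤ _ := sum_le_sum fun x _ => sub_le_mul_log_div (ha x) (hb x)
  have hself : p - 1 ≤ p * log p := by simpa using sub_le_mul_log_div hC.le one_pos
  have hsplit := sum_add_sum_compl C fun x => a x * log (a x / b x)
  rw [log_div hC.ne' hq.ne', mul_sub] at hin
  unfold relEntropy
  linarith

end LogSum

section ProductMeasure

variable {ι A : Type*} [Fintype ι] [DecidableEq ι] [Fintype A] {P : A → ℝ}

theorem sum_prod_eq_one (hP : ∑ a, P a = 1) : ∑ x : ι → A, ∏ k, P (x k) = 1 := by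
  rw [← Fintype.prod_sum (fun _ => P)]
  simp [hP]

theorem sum_prod_le_one (hP0 : ∀ a, 0 ≤ P a) (hP : ∑ a, P a = 1) (C : Finset (ι → A)) :
    ∑ x ∈ C, ∏ k, P (x k) ≤ 1 :=
  (sum_le_univ_sum_of_nonneg fun x => prod_nonneg fun k _ => hP0 (x k)).trans
    (sum_prod_eq_one hP).le

theorem sum_prod_mul_apply (hP : ∑ a, P a = 1) (h : A → ℝ) (i : ι) :
    ∑ x : ι → A, (∏ k, P (x k)) * h (x i) = ∑ a, P a * h a := by
  calc ∑ x : ι → A, (∏ k, P (x k)) * h (x i)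
      = ∑ x : ι → A, ∏ k, P (x k) * (if k = i then h (x k) else 1) :=
        sum_congr rfl fun x _ => by rw [prod_mul_distrib, Fintype.prod_ite_eq']
    _ = ∏ k, ∑ a, P a * (if k = i then h a else 1) :=
        (Fintype.prod_sum fun k a => P a * if k = i then h a else 1).symm
    _ = ∑ a, P a * h a := by simp [apply_ite, hP]

theorem sum_prod_mul_sum_apply (hP : ∑ a, P a = 1) (h : A → ℝ) :
    ∑ x : ι → A, (∏ k, P (x k)) * ∑ i, h (x i) = Fintype.card ι * ∑ a, P a * h a := by
  simp_rw [mul_sum]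
  rw [sum_comm]
  simp only [sum_prod_mul_apply hP, sum_const, card_univ, nsmul_eq_mul, mul_sum]

theorem relEntropy_pi {Q : A → ℝ} (hP : ∑ a, P a = 1) (hQ : ∀ a, Q a ≠ 0) :
    relEntropy (fun x : ι → A => ∏ k, P (x k)) (fun x => ∏ k, Q (x k))
      = Fintype.card ι * relEntropy P Q := by
  have hpoint : ∀ x : ι → A, (∏ k, P (x k)) * log ((∏ k, P (x k)) / ∏ k, Q (x k))
      = (∏ k, P (x k)) * ∑ k, log (P (x k) / Q (x k)) := by
    intro x
    by_cases hx : ∏ k, P (x k) = 0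
    · simp [hx]
    rw [← prod_div_distrib,
      log_prod fun k _ => div_ne_zero (prod_ne_zero_iff.mp hx k (mem_univ k)) (hQ _)]
  simp only [relEntropy, hpoint]
  exact sum_prod_mul_sum_apply hP fun a => log (P a / Q a)

end ProductMeasure

theorem neg_relEntropy_add_two_div_le {A : Type*} [Fintype A] {P₁ P₂ : A → ℝ}
    (hP₁0 : ∀ a, 0 ≤ P₁ a) (hP₁1 : ∑ a, P₁ a = 1) (hP₂ : ∀ a, 0 < P₂ a) (hP₂1 : ∑ a, P₂ a = 1)
    {n : ℕ} (hn : 0 < n) (C : Finset (Fin n → A)) (hC : 0 < ∑ x ∈ C, ∏ i, P₁ (x i)) :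
    -(relEntropy P₁ P₂ + 2 / n) / ∑ x ∈ C, ∏ i, P₁ (x i) ≤
      1 / (n : ℝ) * log (∑ x ∈ C, ∏ i, P₂ (x i)) := by
  have key := neg_relEntropy_sub_two_le_mul_log (fun x => prod_nonneg fun i _ => hP₁0 (x i))
    (fun x => prod_pos fun i _ => hP₂ (x i)) (sum_prod_eq_one hP₂1) C hC
  rw [relEntropy_pi hP₁1 fun a => (hP₂ a).ne', Fintype.card_fin] at key
  have hn' : (0 : ℝ) < n := Nat.cast_pos.mpr hn
  rw [div_le_iff₀ hC]
  field_simp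
  linarith

/-- Converse part of Stein's lemma: if the type-I errors of decision regions `C_n`
vanish, then `liminf (1/n) log P₂ⁿ(C_n) ≥ -H(P₁‖P₂)`. -/
theorem stmt_7 {A : Type*} [Fintype A] (P₁ P₂ : A → ℝ)
    (hP₁0 : ∀ a, 0 ≤ P₁ a) (hP₁1 : ∑ a, P₁ a = 1)
    (hP₂ : ∀ a, 0 < P₂ a) (hP₂1 : ∑ a, P₂ a = 1)
    (C : (n : ℕ) → Finset (Fin n → A))
    (hα : Filter.Tendsto (fun n : ℕ => 1 - ∑ x ∈ C n, ∏ i, P₁ (x i))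
      Filter.atTop (nhds 0)) :
    -(∑ a, P₁ a * Real.log (P₁ a / P₂ a)) ≤
      Filter.liminf (fun n : ℕ => (1 / (n : ℝ)) * Real.log (∑ x ∈ C n, ∏ i, P₂ (x i)))
        Filter.atTop := by
  set p : ℕ → ℝ := fun n => ∑ x ∈ C n, ∏ i, P₁ (x i)
  set q : ℕ → ℝ := fun n => ∑ x ∈ C n, ∏ i, P₂ (x i)
  change -relEntropy P₁ P₂ ≤ liminf (fun n : ℕ => 1 / (n : ℝ) * log (q n)) atTop
  have hp : Tendsto p atTop (𝓝 1) := by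
    simpa using (tendsto_const_nhds (x := (1 : ℝ))).sub hα
  have hlower : ∀ᶠ n : ℕ in atTop,
      -(relEntropy P₁ P₂ + 2 / n) / p n ≤ 1 / (n : ℝ) * log (q n) := by
    filter_upwards [hp.eventually (lt_mem_nhds one_pos), eventually_gt_atTop 0] with n hpn hn
    exact neg_relEntropy_add_two_div_le hP₁0 hP₁1 hP₂ hP₂1 hn (C n) hpn
  have hlim : Tendsto (fun n : ℕ => -(relEntropy P₁ P₂ + 2 / n) / p n) atTop
      (𝓝 (-relEntropy P₁ P₂)) := by
    have h := ((tendsto_const_nhds (x := relEntropy P₁ P₂)).add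
      (tendsto_const_div_atTop_nhds_zero_nat 2)).neg.div hp one_ne_zero
    rwa [add_zero, div_one] at h
  have hupper : ∀ n : ℕ, 1 / (n : ℝ) * log (q n) ≤ 0 := fun n =>
    mul_nonpos_of_nonneg_of_nonpos (by positivity) (log_nonpos
      (sum_nonneg fun x _ => prod_nonneg fun i _ => (hP₂ (x i)).le)
      (sum_prod_le_one (fun a => (hP₂ a).le) hP₂1 (C n)))
  calc -relEntropy P₁ P₂ = liminf (fun n : ℕ => -(relEntropy P₁ P₂ + 2 / n) / p n) atTop :=
        hlim.liminf_eq.symm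
    _ ≤ _ := liminf_le_liminf hlower hlim.isBoundedUnder_ge (isCoboundedUnder_ge_of_le _ hupper)
end

section
/- Let A be a finite set, P a probability mass function on A, M : A → (0,∞), and ρ : A×A → [0,∞) with ρ(a,a)=0 for all a. Set R_min = min_{y∈A} log M(y) and D_max = min{ E_P[ρ(X,y)] : y ∈ A with log M(y) = R_min }. Then the rate function R(D) = inf_{W: W_X=P, E_W ρ ≤ D} {H(W‖W_X×W_Y) + E_{W_Y}[log M(Y)]} satisfies R(D) = R_min for all D ≥ D_max, and R(D) > R_min for 0 ≤ D < D_max. -/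
open scoped BigOperators

/-- `W` is a feasible coupling: a pmf on `A × A` with first marginal `P` and
expected distortion at most `D`. -/
def Feasible {A : Type*} [Fintype A] (P : A → ℝ) (ρ : A → A → ℝ) (D : ℝ)
    (W : A × A → ℝ) : Prop :=
  (∀ p, 0 ≤ W p) ∧ (∑ p, W p) = 1 ∧ (∀ x, (∑ y, W (x, y)) = P x) ∧
    (∑ p : A × A, W p * ρ p.1 p.2) ≤ D

/-- The objective `H(W ‖ W_X × W_Y) + E_{W_Y}[log M(Y)]`. -/
noncomputable def obj {A : Type*} [Fintype A] (M : A → ℝ) (W : A × A → ℝ) : ℝ :=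
  (∑ p : A × A, W p * Real.log (W p / ((∑ y, W (p.1, y)) * (∑ x, W (x, p.2)))))
    + ∑ y, (∑ x, W (x, y)) * Real.log (M y)

/-- The rate function `R(D) = inf { H(W‖W_X×W_Y) + E_{W_Y}[log M] : W_X = P, E_W ρ ≤ D }`. -/
noncomputable def massRate {A : Type*} [Fintype A] (P : A → ℝ) (ρ : A → A → ℝ)
    (M : A → ℝ) (D : ℝ) : ℝ :=
  sInf (obj M '' {W | Feasible P ρ D W})

private lemma key_ineq {w a b : ℝ} (hw : 0 ≤ w) (ha0 : 0 ≤ a) (hb0 : 0 ≤ b)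
    (ha : w ≤ a) (hb : w ≤ b) :
    0 ≤ w * Real.log (w / (a * b)) - (w - a * b) := by
  rcases hw.eq_or_lt with h0 | h0
  · rw [← h0]; simp; positivity
  · have haP : 0 < a := lt_of_lt_of_le h0 ha
    have hbP : 0 < b := lt_of_lt_of_le h0 hb
    have habP : 0 < a * b := mul_pos haP hbP
    have ht : 0 < a * b / w := div_pos habP h0
    have h1 := Real.log_le_sub_one_of_pos ht
    have hlog : Real.log (w / (a * b)) = - Real.log (a * b / w) := by
      rw [← Real.log_inv]; congr 1; field_simp
    have hcanc : w * (a * b / w) = a * b := by field_simp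
    nlinarith [mul_le_mul_of_nonneg_left h1 h0.le]

private lemma key_eq {w a b : ℝ} (hw : 0 ≤ w) (ha : w ≤ a) (hb : w ≤ b)
    (h : w * Real.log (w / (a * b)) - (w - a * b) = 0) : w = a * b := by
  rcases hw.eq_or_lt with h0 | h0
  · rw [← h0] at h ⊢; simpa using h.symm
  · have haP : 0 < a := lt_of_lt_of_le h0 ha
    have hbP : 0 < b := lt_of_lt_of_le h0 hb
    have habP : 0 < a * b := mul_pos haP hbP
    have ht : 0 < a * b / w := div_pos habP h0
    by_contra hne
    have htne : a * b / w ≠ 1 := by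
      intro hc; exact hne (by field_simp at hc; linarith)
    have h1 := Real.log_lt_sub_one_of_pos ht htne
    have hlog : Real.log (w / (a * b)) = - Real.log (a * b / w) := by
      rw [← Real.log_inv]; congr 1; field_simp
    have hcanc : w * (a * b / w) = a * b := by field_simp
    nlinarith [mul_lt_mul_of_pos_left h1 h0]

section Aux
variable {A : Type*} [Fintype A]

private lemma le_margX {W : A × A → ℝ} (h : ∀ p, 0 ≤ W p) (p : A × A) :
    W p ≤ ∑ y, W (p.1, y) := by
  have := Finset.single_le_sum (f := fun y => W (p.1, y))
    (fun i _ => h _) (Finset.mem_univ p.2)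
  simpa using this

private lemma le_margY {W : A × A → ℝ} (h : ∀ p, 0 ≤ W p) (p : A × A) :
    W p ≤ ∑ x, W (x, p.2) := by
  have := Finset.single_le_sum (f := fun x => W (x, p.2))
    (fun i _ => h _) (Finset.mem_univ p.1)
  simpa using this

private lemma master (M : A → ℝ) (Rmin : ℝ) (hR : ∀ y, Rmin ≤ Real.log (M y))
    {W : A × A → ℝ} (hW0 : ∀ p, 0 ≤ W p) (hW1 : ∑ p, W p = 1) :
    Rmin ≤ obj M W ∧
    (obj M W = Rmin →
      (∀ p : A × A, W p = (∑ y, W (p.1, y)) * (∑ x, W (x, p.2))) ∧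
      ∀ y, (∑ x, W (x, y)) ≠ 0 → Real.log (M y) = Rmin) := by
  classical
  set f : A → ℝ := fun x => ∑ y, W (x, y) with hf
  set g : A → ℝ := fun y => ∑ x, W (x, y) with hg
  have hf0 : ∀ x, 0 ≤ f x := fun x => Finset.sum_nonneg fun y _ => hW0 _
  have hg0 : ∀ y, 0 ≤ g y := fun y => Finset.sum_nonneg fun x _ => hW0 _
  have hsumf : ∑ x, f x = 1 := by rw [← hW1, Fintype.sum_prod_type]
  have hsumg : ∑ y, g y = 1 := by rw [← hW1, Fintype.sum_prod_type_right]
  have hV : ∑ p : A × A, f p.1 * g p.2 = 1 := by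
    rw [Fintype.sum_prod_type]
    simp only [← Finset.mul_sum, hsumg, mul_one, hsumf]
  set t : A × A → ℝ := fun p => W p * Real.log (W p / (f p.1 * g p.2)) - (W p - f p.1 * g p.2)
    with htdef
  set u : A → ℝ := fun y => g y * (Real.log (M y) - Rmin) with hudef
  have ht0 : ∀ p, 0 ≤ t p := fun p =>
    key_ineq (hW0 p) (hf0 p.1) (hg0 p.2) (le_margX hW0 p) (le_margY hW0 p)
  have hu0 : ∀ y, 0 ≤ u y := fun y =>
    mul_nonneg (hg0 y) (by linarith [hR y])
  have hsum_t : ∑ p, t p = ∑ p : A × A, W p * Real.log (W p / (f p.1 * g p.2)) := by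
    rw [htdef, Finset.sum_sub_distrib, Finset.sum_sub_distrib, hW1, hV]; ring
  have hsum_u : ∑ y, u y = (∑ y, g y * Real.log (M y)) - Rmin := by
    rw [hudef]; simp only [mul_sub]
    rw [Finset.sum_sub_distrib, ← Finset.sum_mul, hsumg]; ring
  have hobj : obj M W = (∑ p, t p) + ((∑ y, u y) + Rmin) := by
    have : obj M W = (∑ p : A × A, W p * Real.log (W p / (f p.1 * g p.2)))
        + ∑ y, g y * Real.log (M y) := rfl
    rw [this, hsum_t, hsum_u]; ring
  have htsum0 : 0 ≤ ∑ p, t p := Finset.sum_nonneg fun p _ => ht0 p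
  have husum0 : 0 ≤ ∑ y, u y := Finset.sum_nonneg fun y _ => hu0 y
  constructor
  · rw [hobj]; linarith
  · intro heq
    rw [hobj] at heq
    have ht_zero : ∑ p, t p = 0 := by linarith
    have hu_zero : ∑ y, u y = 0 := by linarith
    have htp : ∀ p : A × A, t p = 0 := by
      have := (Finset.sum_eq_zero_iff_of_nonneg (fun p _ => ht0 p)).mp ht_zero
      exact fun p => this p (Finset.mem_univ p)
    have huy : ∀ y, u y = 0 := by
      have := (Finset.sum_eq_zero_iff_of_nonneg (fun y _ => hu0 y)).mp hu_zero
      exact fun y => this y (Finset.mem_univ y)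
    refine ⟨fun p => key_eq (hW0 p) (le_margX hW0 p) (le_margY hW0 p) (htp p), ?_⟩
    intro y hy
    rcases mul_eq_zero.mp (huy y) with h | h
    · exact absurd h hy
    · linarith

private noncomputable def gfun (M : A → ℝ) (W : A × A → ℝ) : ℝ :=
  (∑ p : A × A, W p * Real.log (W p))
    - (∑ x, (∑ y, W (x, y)) * Real.log (∑ y, W (x, y)))
    - (∑ y, (∑ x, W (x, y)) * Real.log (∑ x, W (x, y)))
    + ∑ y, (∑ x, W (x, y)) * Real.log (M y)

private lemma obj_eq_g (M : A → ℝ) {W : A × A → ℝ} (hW : ∀ p, 0 ≤ W p) :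
    obj M W = gfun M W := by
  have hpt : ∀ p : A × A,
      W p * Real.log (W p / ((∑ y, W (p.1, y)) * (∑ x, W (x, p.2))))
        = W p * Real.log (W p) - W p * Real.log (∑ y, W (p.1, y))
            - W p * Real.log (∑ x, W (x, p.2)) := by
    intro p
    rcases (hW p).eq_or_lt with h0 | h0
    · rw [← h0]; ring
    · have hfx : 0 < ∑ y, W (p.1, y) := lt_of_lt_of_le h0 (le_margX hW p)
      have hgy : 0 < ∑ x, W (x, p.2) := lt_of_lt_of_le h0 (le_margY hW p)
      rw [Real.log_div h0.ne' (by positivity), Real.log_mul hfx.ne' hgy.ne']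
      ring
  have h2 : ∑ p : A × A, W p * Real.log (∑ y, W (p.1, y))
      = ∑ x, (∑ y, W (x, y)) * Real.log (∑ y, W (x, y)) := by
    rw [Fintype.sum_prod_type]
    refine Finset.sum_congr rfl fun x _ => ?_
    dsimp only
    rw [← Finset.sum_mul]
  have h3 : ∑ p : A × A, W p * Real.log (∑ x, W (x, p.2))
      = ∑ y, (∑ x, W (x, y)) * Real.log (∑ x, W (x, y)) := by
    rw [Fintype.sum_prod_type_right]
    refine Finset.sum_congr rfl fun y _ => ?_
    dsimp only
    rw [← Finset.sum_mul]
  unfold obj gfun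
  rw [Finset.sum_congr rfl fun p _ => hpt p, Finset.sum_sub_distrib,
    Finset.sum_sub_distrib, h2, h3]

private lemma gfun_cont (M : A → ℝ) : Continuous (gfun (A := A) M) := by
  have h1 : Continuous fun W : A × A → ℝ => ∑ p : A × A, W p * Real.log (W p) :=
    continuous_finset_sum _ fun p _ => Real.continuous_mul_log.comp (continuous_apply p)
  have hmx : ∀ x : A, Continuous fun W : A × A → ℝ => ∑ y, W (x, y) :=
    fun x => continuous_finset_sum _ fun y _ => continuous_apply (x, y)
  have hmy : ∀ y : A, Continuous fun W : A × A → ℝ => ∑ x, W (x, y) :=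
    fun y => continuous_finset_sum _ fun x _ => continuous_apply (x, y)
  exact (((h1.sub (continuous_finset_sum _ fun x _ =>
      Real.continuous_mul_log.comp (hmx x))).sub
    (continuous_finset_sum _ fun y _ => Real.continuous_mul_log.comp (hmy y))).add
    (continuous_finset_sum _ fun y _ => (hmy y).mul continuous_const))

end Aux

/-- Lemma 1(v): with `R_min = min_y log M(y)` and
`D_max = min { E_P[ρ(X,y)] : log M(y) = R_min }`, the rate function satisfies
`R(D) = R_min` for `D ≥ D_max` and `R(D) > R_min` for `0 ≤ D < D_max`. -/
theorem stmt_9 {A : Type*} [Fintype A] (P : A → ℝ) (hP0 : ∀ a, 0 ≤ P a)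
    (hP1 : ∑ a, P a = 1) (ρ : A → A → ℝ) (hρ : ∀ a b, 0 ≤ ρ a b)
    (hρdiag : ∀ a, ρ a a = 0) (M : A → ℝ) (hM : ∀ a, 0 < M a)
    (Rmin Dmax : ℝ)
    (hRmin : IsLeast {r : ℝ | ∃ y, r = Real.log (M y)} Rmin)
    (hDmax : IsLeast {d : ℝ | ∃ y, Real.log (M y) = Rmin ∧ d = ∑ a, P a * ρ a y} Dmax) :
    (∀ D : ℝ, Dmax ≤ D → massRate P ρ M D = Rmin) ∧
    (∀ D : ℝ, 0 ≤ D → D < Dmax → Rmin < massRate P ρ M D) := by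
  classical
  have hR : ∀ y, Rmin ≤ Real.log (M y) := fun y => hRmin.2 ⟨y, rfl⟩
  obtain ⟨y₀, hy₀R, hy₀D⟩ := hDmax.1
  -- the product measure P × δ_{y₀}
  set Wstar : A × A → ℝ := fun p => P p.1 * (if p.2 = y₀ then 1 else 0) with hWstar
  have hWs0 : ∀ p, 0 ≤ Wstar p := by
    intro p
    have h1 : (0:ℝ) ≤ if p.2 = y₀ then (1:ℝ) else 0 := by split <;> norm_num
    exact mul_nonneg (hP0 _) h1
  have hmargX : ∀ x, (∑ y, Wstar (x, y)) = P x := by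
    intro x; rw [hWstar]; simp [mul_ite]
  have hmargY : ∀ y, (∑ x, Wstar (x, y)) = if y = y₀ then 1 else 0 := by
    intro y; rw [hWstar]
    by_cases h : y = y₀ <;> simp [h, hP1]
  have hWs1 : ∑ p, Wstar p = 1 := by
    rw [Fintype.sum_prod_type_right]
    simp only [hmargY]
    simp
  have hWsDist : (∑ p : A × A, Wstar p * ρ p.1 p.2) = Dmax := by
    rw [hy₀D, Fintype.sum_prod_type_right, hWstar]
    simp only [mul_ite, mul_one, mul_zero, ite_mul, zero_mul]
    simp
  have hWsObj : obj M Wstar = Rmin := by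
    unfold obj
    have hfirst : (∑ p : A × A, Wstar p * Real.log (Wstar p /
        ((∑ y, Wstar (p.1, y)) * (∑ x, Wstar (x, p.2))))) = 0 := by
      apply Finset.sum_eq_zero
      intro p _
      rw [hmargX, hmargY]
      by_cases hy : p.2 = y₀
      · simp only [hy, if_pos rfl]
        by_cases hx : P p.1 = 0
        · rw [hWstar]; simp [hx]
        · rw [hWstar]; simp only [hy, if_pos rfl, mul_one]
          rw [div_self (by simpa using mul_ne_zero hx one_ne_zero)]
          · simp
      · rw [hWstar]; simp [hy]
    rw [hfirst, zero_add]
    simp only [hmargY]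
    simp only [ite_mul, one_mul, zero_mul]
    rw [Finset.sum_ite_eq' Finset.univ y₀ (fun y => Real.log (M y))]
    simp [hy₀R]
  -- feasibility of Wstar at level Dmax
  have hWsFeas : ∀ D, Dmax ≤ D → Feasible P ρ D Wstar := fun D hD =>
    ⟨hWs0, hWs1, hmargX, by rw [hWsDist]; exact hD⟩
  constructor
  · intro D hD
    apply IsLeast.csInf_eq
    constructor
    · exact ⟨Wstar, hWsFeas D hD, hWsObj⟩
    · rintro r ⟨W, hWF, rfl⟩
      exact (master M Rmin hR hWF.1 hWF.2.1).1
  · intro D hD0 hDlt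
    set S : Set (A × A → ℝ) := {W | Feasible P ρ D W} with hS
    -- S nonempty via the diagonal coupling
    have hSne : S.Nonempty := by
      refine ⟨fun p => if p.1 = p.2 then P p.1 else 0, ?_, ?_, ?_, ?_⟩
      · intro p; dsimp only; split
        · exact hP0 _
        · exact le_rfl
      · rw [Fintype.sum_prod_type]; simp [Finset.sum_ite_eq, hP1]
      · intro x; simp [Finset.sum_ite_eq]
      · calc (∑ p : A × A, (if p.1 = p.2 then P p.1 else 0) * ρ p.1 p.2) = 0 := by
              rw [Fintype.sum_prod_type]
              apply Finset.sum_eq_zero; intro x _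
              apply Finset.sum_eq_zero; intro y _
              dsimp only
              split
              · next h => rw [h, hρdiag]; ring
              · ring
            _ ≤ D := hD0
    -- S is closed
    have hSclosed : IsClosed S := by
      have hrw : S = (⋂ p : A × A, {W : A × A → ℝ | 0 ≤ W p})
          ∩ ({W : A × A → ℝ | (∑ p, W p) = 1}
          ∩ ((⋂ x : A, {W : A × A → ℝ | (∑ y, W (x, y)) = P x})
          ∩ {W : A × A → ℝ | (∑ p : A × A, W p * ρ p.1 p.2) ≤ D})) := by
        ext W
        simp only [hS, Set.mem_setOf_eq, Set.mem_inter_iff, Set.mem_iInter, Feasible]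
      rw [hrw]
      refine IsClosed.inter (isClosed_iInter fun p =>
          isClosed_le continuous_const (continuous_apply p)) ?_
      refine IsClosed.inter (isClosed_eq
          (continuous_finset_sum _ fun p _ => continuous_apply p) continuous_const) ?_
      refine IsClosed.inter (isClosed_iInter fun x => isClosed_eq
          (continuous_finset_sum _ fun y _ => continuous_apply (x, y)) continuous_const) ?_
      exact isClosed_le (continuous_finset_sum _ fun p _ =>
        (continuous_apply p).mul continuous_const) continuous_const
    -- S is bounded: contained in Icc 0 1
    have hSsub : S ⊆ Set.Icc (0 : A × A → ℝ) 1 := by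
      rintro W ⟨hW0, hW1, -, -⟩
      refine ⟨fun p => hW0 p, fun p => ?_⟩
      calc W p ≤ ∑ q, W q := Finset.single_le_sum (fun q _ => hW0 q) (Finset.mem_univ p)
        _ = 1 := hW1
    have hScompact : IsCompact S := isCompact_Icc.of_isClosed_subset hSclosed hSsub
    obtain ⟨W₀, hW₀S, hW₀min⟩ := hScompact.exists_isMinOn hSne (gfun_cont M).continuousOn
    obtain ⟨hW₀0, hW₀1, hW₀marg, hW₀dist⟩ := hW₀S
    -- massRate ≥ gfun M W₀
    have hlb : gfun M W₀ ≤ massRate P ρ M D := by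
      apply le_csInf
      · exact ⟨obj M W₀, ⟨W₀, ⟨hW₀0, hW₀1, hW₀marg, hW₀dist⟩, rfl⟩⟩
      · rintro r ⟨W, hWF, rfl⟩
        rw [obj_eq_g M hWF.1]
        exact hW₀min hWF
    -- Rmin < gfun M W₀
    have hmaster := master M Rmin hR hW₀0 hW₀1
    rcases lt_or_eq_of_le hmaster.1 with hlt | heq
    · rw [obj_eq_g M hW₀0] at hlt
      exact lt_of_lt_of_le hlt hlb
    · exfalso
      obtain ⟨hprod, hsupp⟩ := hmaster.2 heq.symm
      -- W₀ = P × g; distortion ≥ Dmax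
      set g : A → ℝ := fun y => ∑ x, W₀ (x, y) with hg
      have hg0 : ∀ y, 0 ≤ g y := fun y => Finset.sum_nonneg fun x _ => hW₀0 _
      have hsumg : ∑ y, g y = 1 := by rw [hg]; rw [← hW₀1, Fintype.sum_prod_type_right]
      have hDge : Dmax ≤ ∑ p : A × A, W₀ p * ρ p.1 p.2 := by
        have hrw : (∑ p : A × A, W₀ p * ρ p.1 p.2)
            = ∑ y, g y * (∑ a, P a * ρ a y) := by
          rw [Fintype.sum_prod_type_right]
          refine Finset.sum_congr rfl fun y _ => ?_
          rw [Finset.mul_sum]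
          refine Finset.sum_congr rfl fun x _ => ?_
          have := hprod (x, y)
          rw [hW₀marg x] at this
          rw [this]; ring
        rw [hrw]
        calc Dmax = ∑ y, g y * Dmax := by rw [← Finset.sum_mul, hsumg, one_mul]
          _ ≤ ∑ y, g y * (∑ a, P a * ρ a y) := by
              apply Finset.sum_le_sum
              intro y _
              rcases (hg0 y).eq_or_lt with h0 | h0
              · rw [← h0]; simp
              · have hlog : Real.log (M y) = Rmin := hsupp y h0.ne'
                exact mul_le_mul_of_nonneg_left (hDmax.2 ⟨y, hlog, rfl⟩) (hg0 y)
      linarith [hDge.trans hW₀dist]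
end

section
/- Let A be a finite set, P a probability mass function on A with full support, and define the concentration exponent R_C(D) = inf_{W: W_X=P, E_W ρ ≤ D} {H(W‖W_X×W_Y) + E_{W_Y}[log P(Y)]}, where ρ is a distortion function on A×A. Then for any sequence of sets C_n ⊆ A^n, if P^n([C_n]_D) → 1, where [C_n]_D = {x ∈ A^n : min_{y∈C_n} ρ_n(x,y) ≤ D}, then liminf_{n→∞} (1/n) log P^n(C_n) ≥ R_C(D). -/
/-!
Map each `x ∈ Aⁿ` to a nearest point `φ x ∈ Cₙ` and let `W̄` be the `Pⁿ`-average of the joint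
type of `(x, φ x)`. Its first marginal is `P`, and its expected distortion is at most
`D + (1 - Pⁿ([Cₙ]_D)) (max ρ - D)`, which tends to `D`. Writing `K a b = M b · W̄(a | b)`, the
objective of `W̄` is `(1/n) E_{Pⁿ} log (∏ᵢ K(xᵢ, φ(x)ᵢ) / Pⁿ(x))`; Jensen's inequality bounds it by
`(1/n) log ∑ₓ ∏ᵢ K(xᵢ, φ(x)ᵢ)`, and summing over the fibres of `φ` with `∑ₐ K a b ≤ M b` bounds
that by `(1/n) log Mⁿ(Cₙ)`. Finally, couplings with first marginal `P` form a compact set on which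
the objective is continuous, so nearly feasible couplings have objective at least `R_C(D) - ε`.
-/

open scoped BigOperators Classical

open Finset Real Filter Topology

theorem sum_mul_log_div_le_log_sum {ι : Type*} {s : Finset ι} {w g : ι → ℝ}
    (hw : ∀ i ∈ s, 0 < w i) (hw1 : ∑ i ∈ s, w i = 1) (hg : ∀ i ∈ s, 0 < g i) :
    ∑ i ∈ s, w i * log (g i / w i) ≤ log (∑ i ∈ s, g i) := by
  have := strictConcaveOn_log_Ioi.concaveOn.le_map_sum (fun i hi => (hw i hi).le) hw1
    fun i hi => Set.mem_Ioi.2 (div_pos (hg i hi) (hw i hi))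
  simp only [smul_eq_mul] at this
  rwa [sum_congr rfl fun i hi => mul_div_cancel₀ (g i) (hw i hi).ne'] at this

section
variable {A : Type*} [Fintype A]

def couplings (P : A → ℝ) : Set (A × A → ℝ) :=
  {W | (∀ p, 0 ≤ W p) ∧ ∀ a, ∑ b, W (a, b) = P a}

theorem sum_pi_prod_eq_one {P : A → ℝ} (hP1 : ∑ a, P a = 1) (n : ℕ) :
    ∑ x : Fin n → A, ∏ i, P (x i) = 1 := by
  rw [← Fintype.prod_sum fun _ a => P a]
  simp [hP1]

theorem sum_pi_prod_le_one {P : A → ℝ} (hP : ∀ a, 0 ≤ P a) (hP1 : ∑ a, P a = 1) {n : ℕ}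
    (C : Finset (Fin n → A)) : ∑ x ∈ C, ∏ i, P (x i) ≤ 1 :=
  (sum_le_univ_sum_of_nonneg fun _ => prod_nonneg fun _ _ => hP _).trans_eq
    (sum_pi_prod_eq_one hP1 n)

theorem sum_pi_prod_mul_apply {P : A → ℝ} (hP1 : ∑ a, P a = 1) {n : ℕ} (i : Fin n)
    (g : A → ℝ) : ∑ x : Fin n → A, (∏ j, P (x j)) * g (x i) = ∑ a, P a * g a := by
  calc ∑ x : Fin n → A, (∏ j, P (x j)) * g (x i)
      = ∑ x : Fin n → A, ∏ j, P (x j) * if j = i then g (x j) else 1 := by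
        refine sum_congr rfl fun x _ => ?_
        rw [prod_mul_distrib, prod_ite_eq' univ i]
        simp
    _ = ∏ j, ∑ a, P a * if j = i then g a else 1 :=
        (Fintype.prod_sum fun j a => P a * if j = i then g a else 1).symm
    _ = ∑ a, P a * g a := by
        rw [Fintype.prod_eq_single i fun j hj => by simp [hj, hP1]]
        simp

noncomputable def expectedJointType {n : ℕ} (P : A → ℝ) (φ : (Fin n → A) → Fin n → A)
    (p : A × A) : ℝ :=
  (1 / n) * ∑ x, (∏ i, P (x i)) * ∑ i, if (x i, φ x i) = p then 1 else 0

section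
variable {P : A → ℝ} {n : ℕ} {φ : (Fin n → A) → Fin n → A}

theorem sum_expectedJointType_mul (f : A × A → ℝ) :
    ∑ p, expectedJointType P φ p * f p
      = (1 / n) * ∑ x, (∏ i, P (x i)) * ∑ i, f (x i, φ x i) := by
  simp only [expectedJointType, mul_assoc, ← mul_sum, sum_mul, ite_mul, one_mul, zero_mul]
  rw [sum_comm]
  refine congrArg _ (sum_congr rfl fun x _ => ?_)
  rw [← mul_sum, sum_comm]
  simp

theorem expectedJointType_nonneg (hP : ∀ a, 0 ≤ P a) (p : A × A) :
    0 ≤ expectedJointType P φ p := by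
  refine mul_nonneg (by positivity) (sum_nonneg fun x _ => mul_nonneg ?_ ?_)
  · exact prod_nonneg fun i _ => hP _
  · exact sum_nonneg fun _ _ => by positivity

theorem expectedJointType_pos (hP : ∀ a, 0 < P a) (x : Fin n → A) (i : Fin n) :
    0 < expectedJointType P φ (x i, φ x i) := by
  have hn : (0 : ℝ) < n := by exact_mod_cast i.pos
  refine mul_pos (by positivity) (sum_pos' (fun x _ => ?_) ⟨x, mem_univ x, ?_⟩)
  · exact mul_nonneg (prod_nonneg fun i _ => (hP _).le) (sum_nonneg fun _ _ => by positivity)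
  · exact mul_pos (prod_pos fun i _ => hP _)
      (sum_pos' (fun _ _ => by positivity) ⟨i, mem_univ i, by simp⟩)

theorem expectedJointType_mem_couplings (hP : ∀ a, 0 ≤ P a) (hP1 : ∑ a, P a = 1)
    (hn : 0 < n) : expectedJointType P φ ∈ couplings P := by
  refine ⟨expectedJointType_nonneg hP, fun a => ?_⟩
  have hn' : (n : ℝ) ≠ 0 := by exact_mod_cast hn.ne'
  calc ∑ b, expectedJointType P φ (a, b)
      = ∑ p, expectedJointType P φ p * if p.1 = a then 1 else 0 := by
        symm
        rw [Fintype.sum_prod_type, Fintype.sum_eq_single a fun a' ha' => by simp [ha']]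
        simp
    _ = (1 / n) * ∑ i : Fin n, ∑ x : Fin n → A, (∏ j, P (x j)) * if x i = a then 1 else 0 := by
        rw [sum_expectedJointType_mul]
        simp_rw [mul_sum]
        rw [sum_comm]
    _ = P a := by
        rw [sum_congr rfl fun i _ => sum_pi_prod_mul_apply hP1 i fun c => if c = a then 1 else 0]
        simp [hn']

end

theorem sum_prod_le_sum_prod_sum {n : ℕ} {K : A → A → ℝ} (hK : ∀ a b, 0 ≤ K a b)
    {C : Finset (Fin n → A)} {φ : (Fin n → A) → Fin n → A} (hφ : ∀ x, φ x ∈ C) :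
    ∑ x, ∏ i, K (x i) (φ x i) ≤ ∑ y ∈ C, ∏ i, ∑ a, K a (y i) := by
  rw [← sum_fiberwise_of_maps_to fun x _ => hφ x]
  refine sum_le_sum fun y _ => ?_
  rw [Fintype.prod_sum fun i a => K a (y i)]
  calc ∑ x : Fin n → A with φ x = y, ∏ i, K (x i) (φ x i)
      = ∑ x : Fin n → A with φ x = y, ∏ i, K (x i) (y i) :=
        sum_congr rfl fun x hx => by rw [(mem_filter.1 hx).2]
    _ ≤ ∑ x : Fin n → A, ∏ i, K (x i) (y i) :=
        sum_le_sum_of_subset_of_nonneg (filter_subset _ _) fun x _ _ =>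
          prod_nonneg fun i _ => hK _ _

theorem obj_eq_sum_mul_log {P M : A → ℝ} (hP : ∀ a, 0 < P a) (hM : ∀ b, 0 < M b)
    {W : A × A → ℝ} (hW : W ∈ couplings P) :
    obj M W = ∑ p, W p * log (W p * M p.2 / (∑ a, W (a, p.2)) / P p.1) := by
  obtain ⟨hW0, hWX⟩ := hW
  have hYpos : ∀ p, 0 < W p → 0 < ∑ a, W (a, p.2) := fun p hp =>
    hp.trans_le (single_le_sum (f := fun a => W (a, p.2)) (fun a _ => hW0 _) (mem_univ p.1))
  have hYterm : ∑ b, (∑ a, W (a, b)) * log (M b) = ∑ p, W p * log (M p.2) := by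
    simp only [Fintype.sum_prod_type_right, sum_mul]
  rw [obj, hYterm, ← sum_add_distrib]
  refine sum_congr rfl fun p _ => ?_
  rcases (hW0 p).eq_or_lt with hp | hp
  · simp [← hp]
  have hY := hYpos p hp
  have hPp := hP p.1
  rw [hWX, ← mul_add, mul_comm (P p.1), ← div_div, ← log_mul (by positivity) (hM _).ne']
  congr 2
  ring

theorem obj_expectedJointType_le {P M : A → ℝ} (hP : ∀ a, 0 < P a) (hP1 : ∑ a, P a = 1)
    (hM : ∀ b, 0 < M b) {n : ℕ} (hn : 0 < n) {C : Finset (Fin n → A)}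
    {φ : (Fin n → A) → Fin n → A} (hφ : ∀ x, φ x ∈ C) :
    obj M (expectedJointType P φ) ≤ (1 / n) * log (∑ y ∈ C, ∏ i, M (y i)) := by
  set W := expectedJointType P φ
  have hW : W ∈ couplings P := expectedJointType_mem_couplings (fun a => (hP a).le) hP1 hn
  set K : A → A → ℝ := fun a b => W (a, b) * M b / ∑ a', W (a', b)
  have hK : ∀ a b, 0 ≤ K a b := fun a b =>
    div_nonneg (mul_nonneg (hW.1 _) (hM b).le) (sum_nonneg fun _ _ => hW.1 _)
  have hKpos : ∀ x i, 0 < K (x i) (φ x i) := fun x i =>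
    have hWpos := expectedJointType_pos hP x i
    div_pos (mul_pos hWpos (hM _)) (hWpos.trans_le (single_le_sum (f := fun a => W (a, φ x i))
      (fun _ _ => hW.1 _) (mem_univ (x i))))
  have hKsum : ∀ b, ∑ a, K a b ≤ M b := fun b => by
    rw [← sum_div, ← sum_mul]
    rcases eq_or_ne (∑ a, W (a, b)) 0 with h | h
    · simp [h, (hM b).le]
    · rw [mul_div_cancel_left₀ _ h]
  have hPn : ∀ x : Fin n → A, 0 < ∏ i, P (x i) := fun x => prod_pos fun i _ => hP _
  have : Nonempty A := univ_nonempty_iff.1 (nonempty_of_sum_ne_zero (hP1 ▸ one_ne_zero))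
  have hexp : n * obj M W
      = ∑ x : Fin n → A, (∏ i, P (x i)) * log ((∏ i, K (x i) (φ x i)) / ∏ i, P (x i)) := by
    rw [obj_eq_sum_mul_log hP hM hW, sum_expectedJointType_mul, ← mul_assoc, mul_one_div_cancel
      (by exact_mod_cast hn.ne'), one_mul]
    refine sum_congr rfl fun x _ => congrArg _ ?_
    rw [← prod_div_distrib, log_prod fun i _ => (div_pos (hKpos x i) (hP _)).ne']
  calc obj M W = (1 / n) * (n * obj M W) := by
        rw [← mul_assoc, one_div_mul_cancel (by exact_mod_cast hn.ne'), one_mul]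
    _ ≤ (1 / n) * log (∑ x : Fin n → A, ∏ i, K (x i) (φ x i)) := by
        rw [hexp]
        gcongr
        exact sum_mul_log_div_le_log_sum (fun x _ => hPn x) (sum_pi_prod_eq_one hP1 n)
          fun x _ => prod_pos fun i _ => hKpos x i
    _ ≤ (1 / n) * log (∑ y ∈ C, ∏ i, M (y i)) := by
        gcongr
        · exact sum_pos (fun x _ => prod_pos fun i _ => hKpos x i) univ_nonempty
        · exact (sum_prod_le_sum_prod_sum hK hφ).trans (sum_le_sum fun y _ =>
            prod_le_prod (fun i _ => sum_nonneg fun a _ => hK a _) fun i _ => hKsum _)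

theorem obj_eq_sum_mul_log_marginals (M : A → ℝ) {W : A × A → ℝ} (hW : ∀ p, 0 ≤ W p) :
    obj M W = ∑ p, W p * log (W p) - ∑ a, (∑ b, W (a, b)) * log (∑ b, W (a, b))
      - ∑ b, (∑ a, W (a, b)) * log (∑ a, W (a, b)) + ∑ b, (∑ a, W (a, b)) * log (M b) := by
  have hX : ∑ a, (∑ b, W (a, b)) * log (∑ b, W (a, b))
      = ∑ p, W p * log (∑ b, W (p.1, b)) := by
    simp only [Fintype.sum_prod_type, sum_mul]
  have hY : ∑ b, (∑ a, W (a, b)) * log (∑ a, W (a, b))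
      = ∑ p, W p * log (∑ a, W (a, p.2)) := by
    simp only [Fintype.sum_prod_type_right, sum_mul]
  rw [obj, hX, hY, ← sum_sub_distrib, ← sum_sub_distrib]
  congr 1
  refine sum_congr rfl fun p _ => ?_
  rcases (hW p).eq_or_lt with hp | hp
  · simp [← hp]
  have hXpos : 0 < ∑ b, W (p.1, b) :=
    hp.trans_le (single_le_sum (f := fun b => W (p.1, b)) (fun _ _ => hW _) (mem_univ p.2))
  have hYpos : 0 < ∑ a, W (a, p.2) :=
    hp.trans_le (single_le_sum (f := fun a => W (a, p.2)) (fun _ _ => hW _) (mem_univ p.1))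
  rw [log_div hp.ne' (by positivity), log_mul hXpos.ne' hYpos.ne']
  ring

theorem continuousOn_obj (M : A → ℝ) : ContinuousOn (obj M) {W | ∀ p, 0 ≤ W p} := by
  have hX : ∀ a, Continuous fun W : A × A → ℝ => ∑ b, W (a, b) := fun a =>
    continuous_finsetSum _ fun b _ => continuous_apply _
  have hY : ∀ b, Continuous fun W : A × A → ℝ => ∑ a, W (a, b) := fun b =>
    continuous_finsetSum _ fun a _ => continuous_apply _
  refine Continuous.continuousOn ?_ |>.congr fun W hW => obj_eq_sum_mul_log_marginals M hW
  refine (((continuous_finsetSum _ fun p _ => continuous_mul_log.comp (continuous_apply p)).sub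
    (continuous_finsetSum _ fun a _ => continuous_mul_log.comp (hX a))).sub
    (continuous_finsetSum _ fun b _ => continuous_mul_log.comp (hY b))).add
    (continuous_finsetSum _ fun b _ => (hY b).mul continuous_const)

theorem isCompact_couplings (P : A → ℝ) : IsCompact (couplings P) := by
  refine (isCompact_univ_pi fun p : A × A => isCompact_Icc (a := 0) (b := P p.1)).of_isClosed_subset
    ?_ fun W ⟨hW0, hWX⟩ p _ => ⟨hW0 p, ?_⟩
  · simp only [couplings, Set.ofPred_and, Set.ofPred_forall]
    exact (isClosed_iInter fun p => isClosed_le continuous_const (continuous_apply p)).inter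
      (isClosed_iInter fun a => isClosed_eq
        (continuous_finsetSum _ fun b _ => continuous_apply _) continuous_const)
  · exact hWX p.1 ▸ single_le_sum (f := fun b => W (p.1, b)) (fun _ _ => hW0 _) (mem_univ p.2)

theorem continuous_expectedDistortion (ρ : A → A → ℝ) :
    Continuous fun W : A × A → ℝ => ∑ p, W p * ρ p.1 p.2 :=
  continuous_finsetSum _ fun p _ => (continuous_apply p).mul continuous_const

section
variable {P : A → ℝ} {ρ : A → A → ℝ} {D : ℝ}

theorem feasible_iff (hP1 : ∑ a, P a = 1) {W : A × A → ℝ} :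
    Feasible P ρ D W ↔ W ∈ couplings P ∧ ∑ p, W p * ρ p.1 p.2 ≤ D := by
  refine ⟨fun ⟨h0, _, hX, hD⟩ => ⟨⟨h0, hX⟩, hD⟩, fun ⟨⟨h0, hX⟩, hD⟩ => ⟨h0, ?_, hX, hD⟩⟩
  rw [Fintype.sum_prod_type]
  simp only [hX, hP1]

theorem isCompact_setOf_feasible (hP1 : ∑ a, P a = 1) :
    IsCompact {W | Feasible P ρ D W} := by
  simp only [feasible_iff hP1, Set.ofPred_and, Set.ofPred_mem_eq]
  exact (isCompact_couplings P).inter_right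
    (isClosed_le (continuous_expectedDistortion ρ) continuous_const)

theorem massRate_le_obj (hP1 : ∑ a, P a = 1) (M : A → ℝ) {W : A × A → ℝ}
    (hW : Feasible P ρ D W) : massRate P ρ M D ≤ obj M W :=
  csInf_le ((isCompact_setOf_feasible hP1).bddBelow_image
    ((continuousOn_obj M).mono fun _ hW => hW.1)) ⟨W, hW, rfl⟩

theorem exists_pos_massRate_le_obj_add (hP1 : ∑ a, P a = 1) (M : A → ℝ) {ε : ℝ}
    (hε : 0 < ε) : ∃ δ > 0, ∀ W ∈ couplings P, ∑ p, W p * ρ p.1 p.2 ≤ D + δ →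
      massRate P ρ M D ≤ obj M W + ε := by
  by_contra! h
  choose W hW hdist hlt using fun k : ℕ => h (1 / (k + 1)) Nat.one_div_pos_of_nat
  obtain ⟨W₀, hW₀, σ, hσ, hlim⟩ := (isCompact_couplings P).tendsto_subseq hW
  have hδ : Tendsto (fun k => D + 1 / ((σ k : ℝ) + 1)) atTop (𝓝 D) := by
    simpa using tendsto_const_nhds.add ((tendsto_one_div_add_atTop_nhds_zero_nat (𝕜 := ℝ)).comp
      hσ.tendsto_atTop)
  have hdist₀ : ∑ p, W₀ p * ρ p.1 p.2 ≤ D :=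
    le_of_tendsto_of_tendsto' (((continuous_expectedDistortion ρ).tendsto W₀).comp hlim) hδ
      fun k => hdist (σ k)
  have hobj : Tendsto (fun k => obj M (W (σ k))) atTop (𝓝 (obj M W₀)) :=
    (continuousOn_obj M W₀ hW₀.1).tendsto.comp
      (tendsto_nhdsWithin_iff.2 ⟨hlim, Eventually.of_forall fun k => (hW (σ k)).1⟩)
  have hobj₀ : obj M W₀ ≤ massRate P ρ M D - ε :=
    le_of_tendsto hobj (Eventually.of_forall fun k => by linarith [hlt (σ k)])
  linarith [massRate_le_obj hP1 M ((feasible_iff hP1).2 ⟨hW₀, hdist₀⟩)]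

end

theorem exists_coupling_of_blowup {P M : A → ℝ} (hP : ∀ a, 0 < P a) (hP1 : ∑ a, P a = 1)
    (hM : ∀ b, 0 < M b) {ρ : A → A → ℝ} {R : ℝ} (hR : ∀ a b, ρ a b ≤ R) (D : ℝ)
    {n : ℕ} (hn : 0 < n) {C : Finset (Fin n → A)} (hC : C.Nonempty) :
    ∃ W ∈ couplings P, ∑ p, W p * ρ p.1 p.2 ≤ D + (1 - ∑ x : Fin n → A,
        if ∃ y ∈ C, (1 / (n : ℝ)) * ∑ i, ρ (x i) (y i) ≤ D then ∏ i, P (x i) else 0) * (R - D) ∧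
      obj M W ≤ (1 / n) * log (∑ y ∈ C, ∏ i, M (y i)) := by
  set d : (Fin n → A) → (Fin n → A) → ℝ := fun x y => (1 / (n : ℝ)) * ∑ i, ρ (x i) (y i)
  choose φ hφC hφmin using fun x => C.exists_min_image (d x) hC
  refine ⟨expectedJointType P φ, expectedJointType_mem_couplings (fun a => (hP a).le) hP1 hn,
    ?_, obj_expectedJointType_le hP hP1 hM hn hφC⟩
  have hd : ∀ x, (∏ i, P (x i)) * d x (φ x) ≤ (∏ i, P (x i)) * D
      + ((∏ i, P (x i)) - if ∃ y ∈ C, d x y ≤ D then ∏ i, P (x i) else 0) * (R - D) := by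
    intro x
    have hPx : 0 ≤ ∏ i, P (x i) := prod_nonneg fun i _ => (hP _).le
    split_ifs with h
    · obtain ⟨y, hy, hyD⟩ := h
      simpa using mul_le_mul_of_nonneg_left ((hφmin x y hy).trans hyD) hPx
    · have hdR : d x (φ x) ≤ R := by
        calc d x (φ x) ≤ (1 / (n : ℝ)) * ∑ _i : Fin n, R :=
              mul_le_mul_of_nonneg_left (sum_le_sum fun i _ => hR _ _) (by positivity)
          _ = R := by
              rw [sum_const, card_univ, Fintype.card_fin, nsmul_eq_mul]
              field_simp
      linear_combination mul_le_mul_of_nonneg_left hdR hPx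
  calc ∑ p, expectedJointType P φ p * ρ p.1 p.2 = ∑ x, (∏ i, P (x i)) * d x (φ x) := by
        rw [sum_expectedJointType_mul, mul_sum]
        exact sum_congr rfl fun x _ => by ring
    _ ≤ _ := sum_le_sum fun x _ => hd x
    _ = _ := by
        rw [sum_add_distrib, ← sum_mul, ← sum_mul, sum_sub_distrib, sum_pi_prod_eq_one hP1]
        ring

end

theorem stmt_10_general {A : Type*} [Fintype A] (P : A → ℝ) (hP : ∀ a, 0 < P a)
    (hP1 : ∑ a, P a = 1) (ρ : A → A → ℝ)
    (D : ℝ) (C : (n : ℕ) → Finset (Fin n → A))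
    (hblow : Filter.Tendsto (fun n : ℕ => ∑ x : Fin n → A,
        if ∃ y ∈ C n, (1 / (n : ℝ)) * ∑ i, ρ (x i) (y i) ≤ D then ∏ i, P (x i) else 0)
      Filter.atTop (nhds 1)) :
    massRate P ρ P D ≤
      Filter.liminf (fun n : ℕ => (1 / (n : ℝ)) * Real.log (∑ x ∈ C n, ∏ i, P (x i)))
        Filter.atTop := by
  obtain ⟨R, hR⟩ := (Set.finite_range fun p : A × A => ρ p.1 p.2).bddAbove
  have hlog_nonpos : ∀ n : ℕ, (1 / (n : ℝ)) * log (∑ x ∈ C n, ∏ i, P (x i)) ≤ 0 := fun n =>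
    mul_nonpos_of_nonneg_of_nonpos (by positivity) (log_nonpos
      (sum_nonneg fun x _ => prod_nonneg fun i _ => (hP _).le)
      (sum_pi_prod_le_one (fun a => (hP a).le) hP1 (C n)))
  refine le_of_forall_pos_le_add fun ε hε => ?_
  obtain ⟨δ, hδ, hnear⟩ := exists_pos_massRate_le_obj_add (ρ := ρ) (D := D) hP1 P hε
  have hdist : Tendsto (fun n => D + (1 - ∑ x : Fin n → A,
      if ∃ y ∈ C n, (1 / (n : ℝ)) * ∑ i, ρ (x i) (y i) ≤ D then ∏ i, P (x i) else 0) * (R - D))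
      atTop (𝓝 D) := by
    simpa using (tendsto_const_nhds (x := D)).add
      (((tendsto_const_nhds (x := (1 : ℝ))).sub hblow).mul_const (R - D))
  rw [← sub_le_iff_le_add]
  refine le_liminf_of_le (isCoboundedUnder_ge_of_le atTop hlog_nonpos) ?_
  filter_upwards [hdist.eventually (gt_mem_nhds (lt_add_of_pos_right D hδ)),
    hblow.eventually (lt_mem_nhds one_pos), eventually_gt_atTop 0] with n hdist_n hblow_n hn
  obtain ⟨x, -, hx⟩ := exists_ne_zero_of_sum_ne_zero hblow_n.ne'
  obtain ⟨y, hy, -⟩ := (ite_ne_right_iff.1 hx).1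
  obtain ⟨W, hW, hWdist, hWobj⟩ :=
    exists_coupling_of_blowup hP hP1 hP (fun a b => hR ⟨(a, b), rfl⟩) D hn ⟨y, hy⟩
  linarith [hnear W hW (hWdist.trans hdist_n.le)]

/-- Corollary 3(ii), converse measure concentration: if the `D`-blowups of the sets
`C_n` have `Pⁿ`-probability tending to 1, then
`liminf (1/n) log Pⁿ(C_n) ≥ R_C(D) = R(D; P, P)`. -/
theorem stmt_10 {A : Type*} [Fintype A] (P : A → ℝ) (hP : ∀ a, 0 < P a)
    (hP1 : ∑ a, P a = 1) (ρ : A → A → ℝ) (hρ : ∀ a b, 0 ≤ ρ a b)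
    (D : ℝ) (hD : 0 ≤ D) (C : (n : ℕ) → Finset (Fin n → A))
    (hblow : Filter.Tendsto (fun n : ℕ => ∑ x : Fin n → A,
        if ∃ y ∈ C n, (1 / (n : ℝ)) * ∑ i, ρ (x i) (y i) ≤ D then ∏ i, P (x i) else 0)
      Filter.atTop (nhds 1)) :
    massRate P ρ P D ≤
      Filter.liminf (fun n : ℕ => (1 / (n : ℝ)) * Real.log (∑ x ∈ C n, ∏ i, P (x i)))
        Filter.atTop :=
  stmt_10_general P hP hP1 ρ D C hblow
end

section
/- Let A be a finite set, P a probability mass function on A, ρ a distortion function on A×A, and define the Shannon rate-distortion function R_S(D) = inf { I(X;Y) : X ∼ P, E[ρ(X,Y)] ≤ D }, the infimum over joint laws of (X,Y) on A×A. Then for any n ≥ 1 and any nonempty codebook C_n ⊆ A^n, if D = E_{P^n}[min_{y∈C_n} ρ_n(X_1^n,y)], then (1/n) log |C_n| ≥ R_S(D). -/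
open scoped BigOperators

/-- Mutual information of a joint pmf `W` on `S × T`. -/
noncomputable def mi {S T : Type*} [Fintype S] [Fintype T] (W : S × T → ℝ) : ℝ :=
  ∑ p : S × T, W p * Real.log (W p / ((∑ t, W (p.1, t)) * (∑ s, W (s, p.2))))

/-!
Let `X ~ Pⁿ`, let `Y = φ X` be a codeword of `C` nearest to `X`, and let `W̄` be the average over
`i` of the joint laws `Wᵢ` of `(Xᵢ, Yᵢ)`. Then `W̄` has first marginal `P` and expected distortion
exactly `D`, so it is feasible and `R_S(D) ≤ I(W̄)`. By the log-sum inequality mutual information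
is convex in the channel for a fixed input law, so `I(W̄) ≤ (1/n) ∑ᵢ I(Wᵢ)`. Writing `ιᵢ` for the
information density of `Wᵢ`, Jensen gives `∑ᵢ I(Wᵢ) = E log ∏ᵢ ιᵢ(Xᵢ, Yᵢ) ≤ log E ∏ᵢ ιᵢ(Xᵢ, Yᵢ)`,
and replacing the codeword `Y` by a sum over all of `C`,
`E ∏ᵢ ιᵢ(Xᵢ, Yᵢ) ≤ ∑_{y ∈ C} ∏ᵢ ∑ₐ P a ιᵢ(a, yᵢ) ≤ |C|`.
-/
open Finset Real

theorem mul_log_add_sub_le_mul_log_div {u v c : ℝ} (hu : 0 ≤ u) (hv : 0 ≤ v) (hc : 0 < c)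
    (huv : v = 0 → u = 0) : u * log c + u - c * v ≤ u * log (u / v) := by
  rcases hu.eq_or_lt with rfl | hu
  · simp only [zero_mul, zero_add, zero_sub, neg_nonpos]
    positivity
  have hv : 0 < v := hv.lt_of_ne fun h => hu.ne' (huv h.symm)
  have key := one_sub_inv_le_log_of_pos (show 0 < u / (c * v) by positivity)
  rw [inv_div, log_div hu.ne' (by positivity), log_mul hc.ne' hv.ne'] at key
  rw [log_div hu.ne' hv.ne']
  have : u * (c * v / u) = c * v := by field_simp
  nlinarith [mul_le_mul_of_nonneg_left key hu.le]

/-- The log-sum inequality. -/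
theorem sum_mul_log_div_le {ι : Type*} (s : Finset ι) {u v : ι → ℝ}
    (hu : ∀ i ∈ s, 0 ≤ u i) (hv : ∀ i ∈ s, 0 ≤ v i) (huv : ∀ i ∈ s, v i = 0 → u i = 0) :
    (∑ i ∈ s, u i) * log ((∑ i ∈ s, u i) / ∑ i ∈ s, v i) ≤
      ∑ i ∈ s, u i * log (u i / v i) := by
  rcases (sum_nonneg hu).eq_or_lt with hS | hS
  · rw [← hS, zero_mul]
    rw [eq_comm, sum_eq_zero_iff_of_nonneg hu] at hS
    exact (sum_eq_zero fun i hi => by rw [hS i hi, zero_mul]).ge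
  have hT : 0 < ∑ i ∈ s, v i := by
    refine (sum_nonneg hv).lt_of_ne fun hT => hS.ne' (sum_eq_zero fun i hi => huv i hi ?_)
    exact (sum_eq_zero_iff_of_nonneg hv).1 hT.symm i hi
  have key := sum_le_sum fun i hi =>
    mul_log_add_sub_le_mul_log_div (hu i hi) (hv i hi) (div_pos hS hT) (huv i hi)
  rwa [sum_sub_distrib, sum_add_distrib, ← sum_mul, ← mul_sum, div_mul_cancel₀ _ hT.ne',
    add_sub_cancel_right] at key

theorem sum_mul_log_le_log_sum_mul {ι : Type*} (s : Finset ι) {w g : ι → ℝ}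
    (hw : ∀ i ∈ s, 0 ≤ w i) (hw1 : ∑ i ∈ s, w i = 1)
    (hg : ∀ i ∈ s, 0 < w i → 0 < g i) :
    ∑ i ∈ s, w i * log (g i) ≤ log (∑ i ∈ s, w i * g i) := by
  have hwg : ∀ i ∈ s, w i = 0 ∨ 0 < w i * g i := fun i hi =>
    (hw i hi).eq_or_lt.imp Eq.symm fun h => mul_pos h (hg i hi h)
  have key := sum_mul_log_div_le s (u := w) (v := fun i => w i * g i) hw
    (fun i hi => (hwg i hi).elim (fun h => by simp [h]) le_of_lt)
    (fun i hi h => (hwg i hi).resolve_right h.not_gt)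
  have hterm : ∀ i ∈ s, w i * log (w i / (w i * g i)) = -(w i * log (g i)) := by
    intro i hi
    rcases (hw i hi).eq_or_lt with h | h
    · simp [← h]
    · rw [div_mul_cancel_left₀ h.ne', log_inv, mul_neg]
  rw [sum_congr rfl hterm, sum_neg_distrib, hw1, one_div, log_inv, one_mul] at key
  linarith

section Marginals

variable {S T : Type*}

def fstMarginal [Fintype T] (W : S × T → ℝ) (s : S) : ℝ := ∑ t, W (s, t)

def sndMarginal [Fintype S] (W : S × T → ℝ) (t : T) : ℝ := ∑ s, W (s, t)

noncomputable def infoDensity [Fintype S] [Fintype T] (W : S × T → ℝ) (p : S × T) : ℝ :=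
  W p / (fstMarginal W p.1 * sndMarginal W p.2)

theorem mi_eq_sum_mul_log_infoDensity [Fintype S] [Fintype T] (W : S × T → ℝ) :
    mi W = ∑ p, W p * log (infoDensity W p) := rfl

theorem le_fstMarginal [Fintype T] {W : S × T → ℝ} (hW : ∀ p, 0 ≤ W p) (p : S × T) :
    W p ≤ fstMarginal W p.1 :=
  single_le_sum (f := fun t => W (p.1, t)) (fun _ _ => hW _) (mem_univ p.2)

theorem le_sndMarginal [Fintype S] {W : S × T → ℝ} (hW : ∀ p, 0 ≤ W p) (p : S × T) :
    W p ≤ sndMarginal W p.2 :=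
  single_le_sum (f := fun s => W (s, p.2)) (fun _ _ => hW _) (mem_univ p.1)

theorem fstMarginal_nonneg [Fintype T] {W : S × T → ℝ} (hW : ∀ p, 0 ≤ W p) (s : S) :
    0 ≤ fstMarginal W s :=
  sum_nonneg fun _ _ => hW _

theorem sndMarginal_nonneg [Fintype S] {W : S × T → ℝ} (hW : ∀ p, 0 ≤ W p) (t : T) :
    0 ≤ sndMarginal W t :=
  sum_nonneg fun _ _ => hW _

theorem eq_zero_of_fstMarginal_mul_sndMarginal_eq_zero [Fintype S] [Fintype T]
    {W : S × T → ℝ} (hW : ∀ p, 0 ≤ W p) {p : S × T}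
    (h : fstMarginal W p.1 * sndMarginal W p.2 = 0) : W p = 0 := by
  rcases mul_eq_zero.1 h with h | h
  · exact (h ▸ le_fstMarginal hW p).antisymm (hW p)
  · exact (h ▸ le_sndMarginal hW p).antisymm (hW p)

theorem infoDensity_nonneg [Fintype S] [Fintype T] {W : S × T → ℝ} (hW : ∀ p, 0 ≤ W p)
    (p : S × T) :
    0 ≤ infoDensity W p :=
  div_nonneg (hW p) (mul_nonneg (fstMarginal_nonneg hW _) (sndMarginal_nonneg hW _))

theorem infoDensity_pos [Fintype S] [Fintype T] {W : S × T → ℝ} (hW : ∀ p, 0 ≤ W p)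
    {p : S × T} (hp : 0 < W p) :
    0 < infoDensity W p :=
  div_pos hp (mul_pos (hp.trans_le (le_fstMarginal hW p)) (hp.trans_le (le_sndMarginal hW p)))

theorem sum_fstMarginal_mul_infoDensity_le_one [Fintype S] [Fintype T] {W : S × T → ℝ}
    (hW : ∀ p, 0 ≤ W p) (t : T) :
    ∑ s, fstMarginal W s * infoDensity W (s, t) ≤ 1 := by
  have hterm : ∀ s, fstMarginal W s * infoDensity W (s, t) = W (s, t) / sndMarginal W t := by
    intro s
    rcases (fstMarginal_nonneg hW s).eq_or_lt with h | h
    · rw [← h, zero_mul, (le_fstMarginal hW (s, t)).trans h.ge |>.antisymm (hW _), zero_div]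
    · rw [infoDensity, mul_div_assoc', mul_div_mul_left _ _ h.ne']
  rw [sum_congr rfl fun s _ => hterm s, ← sum_div]
  exact div_self_le_one _

theorem mi_nonneg [Fintype S] [Fintype T] {W : S × T → ℝ} (hW : ∀ p, 0 ≤ W p)
    (hW1 : ∑ p, W p = 1) : 0 ≤ mi W := by
  have key := sum_mul_log_div_le univ (u := W) (fun p _ => hW p)
    (fun _ _ => mul_nonneg (fstMarginal_nonneg hW _) (sndMarginal_nonneg hW _))
    (fun _ _ => eq_zero_of_fstMarginal_mul_sndMarginal_eq_zero hW)
  have hprod : ∑ p : S × T, fstMarginal W p.1 * sndMarginal W p.2 = 1 := by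
    have hfst : ∑ s, fstMarginal W s = 1 := by rw [← hW1, Fintype.sum_prod_type]; rfl
    have hsnd : ∑ t, sndMarginal W t = 1 := by rw [← hW1, Fintype.sum_prod_type_right]; rfl
    rw [Fintype.sum_prod_type, ← Fintype.sum_mul_sum, hfst, hsnd, one_mul]
  rwa [hW1, hprod, div_one, log_one, mul_zero] at key

theorem fstMarginal_sum_smul [Fintype T] {ι : Type*} [Fintype ι] (w : ι → ℝ)
    (W : ι → S × T → ℝ) (s : S) :
    fstMarginal (∑ i, w i • W i) s = ∑ i, w i * fstMarginal (W i) s := by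
  simp only [fstMarginal, Finset.sum_apply, Pi.smul_apply, smul_eq_mul, mul_sum]
  exact sum_comm

theorem sndMarginal_sum_smul [Fintype S] {ι : Type*} [Fintype ι] (w : ι → ℝ)
    (W : ι → S × T → ℝ) (t : T) :
    sndMarginal (∑ i, w i • W i) t = ∑ i, w i * sndMarginal (W i) t := by
  simp only [sndMarginal, Finset.sum_apply, Pi.smul_apply, smul_eq_mul, mul_sum]
  exact sum_comm

end Marginals

theorem mi_sum_smul_le {S T ι : Type*} [Fintype S] [Fintype T] [Fintype ι] {w : ι → ℝ}
    {W : ι → S × T → ℝ} {P : S → ℝ} (hw : ∀ i, 0 ≤ w i) (hw1 : ∑ i, w i = 1)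
    (hW : ∀ i p, 0 ≤ W i p) (hP : ∀ i, fstMarginal (W i) = P) :
    mi (∑ i, w i • W i) ≤ ∑ i, w i * mi (W i) := by
  have hM : ∀ p, (∑ i, w i • W i) p = ∑ i, w i * W i p := fun p => by
    simp only [Finset.sum_apply, Pi.smul_apply, smul_eq_mul]
  have hmarg : ∀ p : S × T,
      fstMarginal (∑ i, w i • W i) p.1 * sndMarginal (∑ i, w i • W i) p.2
        = ∑ i, w i * (fstMarginal (W i) p.1 * sndMarginal (W i) p.2) := fun p => by
    simp only [fstMarginal_sum_smul, sndMarginal_sum_smul, hP, ← sum_mul, hw1, one_mul, mul_sum]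
    exact sum_congr rfl fun i _ => by ring
  have hterm : ∀ i p, w i * W i p * log (w i * W i p /
      (w i * (fstMarginal (W i) p.1 * sndMarginal (W i) p.2)))
      = w i * (W i p * log (infoDensity (W i) p)) := fun i p => by
    rcases (hw i).eq_or_lt with h | h
    · simp [← h]
    · rw [mul_div_mul_left _ _ h.ne', infoDensity, mul_assoc]
  calc mi (∑ i, w i • W i)
      ≤ ∑ p, ∑ i, w i * (W i p * log (infoDensity (W i) p)) := by
        refine sum_le_sum fun p _ => ?_
        have key := sum_mul_log_div_le univ (u := fun i => w i * W i p)
          (fun i _ => mul_nonneg (hw i) (hW i p))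
          (fun i _ => mul_nonneg (hw i)
            (mul_nonneg (fstMarginal_nonneg (hW i) _) (sndMarginal_nonneg (hW i) _)))
          (fun i _ h => by
            rcases mul_eq_zero.1 h with h | h
            · rw [h, zero_mul]
            · rw [eq_zero_of_fstMarginal_mul_sndMarginal_eq_zero (hW i) h, mul_zero])
        simp only [hterm] at key
        rwa [← hM, ← hmarg] at key
    _ = ∑ i, w i * mi (W i) := by
        rw [sum_comm]
        simp only [mi_eq_sum_mul_log_infoDensity, mul_sum]

section Pushforward

variable {α β : Type*} [Fintype α] [DecidableEq β]

def pushforward (μ : α → ℝ) (f : α → β) (b : β) : ℝ := ∑ a with f a = b, μ a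

theorem pushforward_nonneg {μ : α → ℝ} (hμ : ∀ a, 0 ≤ μ a) (f : α → β) (b : β) :
    0 ≤ pushforward μ f b :=
  sum_nonneg fun _ _ => hμ _

theorem le_pushforward_apply {μ : α → ℝ} (hμ : ∀ a, 0 ≤ μ a) (f : α → β) (a : α) :
    μ a ≤ pushforward μ f (f a) :=
  single_le_sum (f := μ) (fun _ _ => hμ _) (mem_filter.2 ⟨mem_univ a, rfl⟩)

theorem sum_pushforward_mul [Fintype β] (μ : α → ℝ) (f : α → β) (F : β → ℝ) :
    ∑ b, pushforward μ f b * F b = ∑ a, μ a * F (f a) := by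
  rw [← sum_fiberwise univ f fun a => μ a * F (f a)]
  refine sum_congr rfl fun b _ => ?_
  rw [pushforward, sum_mul]
  exact sum_congr rfl fun a ha => by rw [(mem_filter.1 ha).2]

theorem fstMarginal_pushforward {S T : Type*} [DecidableEq S] [Fintype T] [DecidableEq T]
    (μ : α → ℝ) (f : α → S × T) :
    fstMarginal (pushforward μ f) = pushforward μ fun a => (f a).1 := by
  ext s
  simp only [fstMarginal, pushforward, sum_filter]
  rw [sum_comm]
  refine sum_congr rfl fun a _ => ?_
  obtain ⟨s', t'⟩ := f a
  by_cases h : s' = s <;> simp [h]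

end Pushforward

section ProductLaw

variable {ι S : Type*} [Fintype ι]

def piPmf (P : S → ℝ) (x : ι → S) : ℝ := ∏ j, P (x j)

theorem piPmf_nonneg {P : S → ℝ} (hP0 : ∀ a, 0 ≤ P a) (x : ι → S) : 0 ≤ piPmf P x :=
  prod_nonneg fun _ _ => hP0 _

theorem sum_piPmf_mul_prod [DecidableEq ι] [Fintype S] (P : S → ℝ) (f : ι → S → ℝ) :
    ∑ x, piPmf P x * ∏ j, f j (x j) = ∏ j, ∑ a, P a * f j a := by
  simp only [piPmf, ← prod_mul_distrib]
  exact (Fintype.prod_sum fun j a => P a * f j a).symm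

theorem sum_piPmf [DecidableEq ι] [Fintype S] {P : S → ℝ} (hP1 : ∑ a, P a = 1) :
    ∑ x : ι → S, piPmf P x = 1 := by
  simpa [hP1] using sum_piPmf_mul_prod (ι := ι) P fun _ _ => 1

theorem pushforward_piPmf_eval [DecidableEq ι] [Fintype S] [DecidableEq S] {P : S → ℝ}
    (hP1 : ∑ a, P a = 1) (i : ι) :
    pushforward (piPmf P) (fun x : ι → S => x i) = P := by
  ext a
  have key := sum_piPmf_mul_prod P fun j b => if j = i then (if b = a then 1 else 0) else 1
  simp only [prod_ite_eq', mem_univ, if_true, mul_ite, mul_one, mul_zero] at key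
  rw [pushforward, sum_filter, key, prod_eq_single i (fun j _ hj => by simp [hj, hP1]) (by simp)]
  simp

end ProductLaw

theorem sum_piPmf_mul_prod_infoDensity_le_card {ι S T : Type*} [Fintype ι] [DecidableEq ι]
    [Fintype S] [Fintype T] {P : S → ℝ} (hP0 : ∀ a, 0 ≤ P a) {W : ι → S × T → ℝ}
    (hW : ∀ i p, 0 ≤ W i p) (hP : ∀ i, fstMarginal (W i) = P) {φ : (ι → S) → ι → T}
    {C : Finset (ι → T)} (hφ : ∀ x, φ x ∈ C) :
    ∑ x, piPmf P x * ∏ i, infoDensity (W i) (x i, φ x i) ≤ C.card := by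
  have hnn : ∀ x (y : ι → T), 0 ≤ piPmf P x * ∏ i, infoDensity (W i) (x i, y i) :=
    fun x _ => mul_nonneg (piPmf_nonneg hP0 x) (prod_nonneg fun i _ => infoDensity_nonneg (hW i) _)
  calc ∑ x, piPmf P x * ∏ i, infoDensity (W i) (x i, φ x i)
      ≤ ∑ x, ∑ y ∈ C, piPmf P x * ∏ i, infoDensity (W i) (x i, y i) :=
        sum_le_sum fun x _ =>
          single_le_sum (f := fun y => piPmf P x * ∏ i, infoDensity (W i) (x i, y i))
            (fun y _ => hnn x y) (hφ x)
    _ = ∑ y ∈ C, ∏ i, ∑ a, P a * infoDensity (W i) (a, y i) := by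
        rw [sum_comm]
        exact sum_congr rfl fun y _ => sum_piPmf_mul_prod P fun i a => infoDensity (W i) (a, y i)
    _ ≤ ∑ _y ∈ C, 1 := by
        refine sum_le_sum fun y _ => prod_le_one (fun i _ => ?_) fun i _ => ?_
        · exact sum_nonneg fun a _ => mul_nonneg (hP0 a) (infoDensity_nonneg (hW i) _)
        · simpa only [hP] using sum_fstMarginal_mul_infoDensity_le_one (hW i) (y i)
    _ = C.card := by simp

section CoordLaw

variable {ι S T : Type*} [Fintype ι] [DecidableEq ι] [Fintype S] [DecidableEq S]
  [DecidableEq T]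

/-- The joint law of `(X i, φ X i)` for `X` distributed as `piPmf P`. -/
noncomputable def coordLaw (P : S → ℝ) (φ : (ι → S) → ι → T) (i : ι) :
    S × T → ℝ :=
  pushforward (piPmf P) fun x => (x i, φ x i)

theorem coordLaw_nonneg {P : S → ℝ} (hP0 : ∀ a, 0 ≤ P a) (φ : (ι → S) → ι → T)
    (i : ι) (p : S × T) : 0 ≤ coordLaw P φ i p :=
  pushforward_nonneg (piPmf_nonneg hP0) _ p

theorem sum_coordLaw_mul [Fintype T] (P : S → ℝ) (φ : (ι → S) → ι → T) (i : ι)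
    (F : S × T → ℝ) :
    ∑ p, coordLaw P φ i p * F p = ∑ x, piPmf P x * F (x i, φ x i) :=
  sum_pushforward_mul _ _ F

theorem fstMarginal_coordLaw [Fintype T] {P : S → ℝ} (hP1 : ∑ a, P a = 1)
    (φ : (ι → S) → ι → T) (i : ι) :
    fstMarginal (coordLaw P φ i) = P :=
  (fstMarginal_pushforward _ _).trans (pushforward_piPmf_eval hP1 i)

theorem sum_mi_coordLaw_le_log_card [Fintype T] {P : S → ℝ} (hP0 : ∀ a, 0 ≤ P a)
    (hP1 : ∑ a, P a = 1) {φ : (ι → S) → ι → T} {C : Finset (ι → T)}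
    (hφ : ∀ x, φ x ∈ C) :
    ∑ i, mi (coordLaw P φ i) ≤ log C.card := by
  set G : (ι → S) → ℝ := fun x => ∏ i, infoDensity (coordLaw P φ i) (x i, φ x i)
  have hpos : ∀ x, 0 < piPmf P x → ∀ i, 0 < infoDensity (coordLaw P φ i) (x i, φ x i) :=
    fun x hx i => infoDensity_pos (coordLaw_nonneg hP0 φ i)
      (hx.trans_le (le_pushforward_apply (piPmf_nonneg hP0) _ x))
  have hGpos : ∀ x, 0 < piPmf P x → 0 < G x := fun x hx => prod_pos fun i _ => hpos x hx i
  have hmi : ∑ i, mi (coordLaw P φ i) = ∑ x, piPmf P x * log (G x) := by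
    simp only [mi_eq_sum_mul_log_infoDensity, sum_coordLaw_mul]
    rw [sum_comm]
    refine sum_congr rfl fun x _ => ?_
    rcases (piPmf_nonneg hP0 x).eq_or_lt with hx | hx
    · simp [← hx]
    · rw [← mul_sum, log_prod fun i _ => (hpos x hx i).ne']
  obtain ⟨x₀, hx₀⟩ : ∃ x : ι → S, 0 < piPmf P x := by
    by_contra! h
    linarith [sum_nonpos fun x (_ : x ∈ univ) => h x, sum_piPmf (ι := ι) hP1]
  have hsum_pos : 0 < ∑ x, piPmf P x * G x :=
    sum_pos' (fun x _ => mul_nonneg (piPmf_nonneg hP0 x) (prod_nonneg fun i _ =>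
        infoDensity_nonneg (coordLaw_nonneg hP0 φ i) _))
      ⟨x₀, mem_univ _, mul_pos hx₀ (hGpos x₀ hx₀)⟩
  calc ∑ i, mi (coordLaw P φ i) = ∑ x, piPmf P x * log (G x) := hmi
    _ ≤ log (∑ x, piPmf P x * G x) :=
        sum_mul_log_le_log_sum_mul univ (fun x _ => piPmf_nonneg hP0 x)
          (sum_piPmf (ι := ι) hP1) fun x _ => hGpos x
    _ ≤ log C.card := log_le_log hsum_pos
        (sum_piPmf_mul_prod_infoDensity_le_card hP0 (coordLaw_nonneg hP0 φ)
          (fstMarginal_coordLaw hP1 φ) hφ)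

end CoordLaw

theorem feasible_sum_smul_coordLaw {A ι : Type*} [Fintype A] [DecidableEq A] [Fintype ι]
    [DecidableEq ι] {P : A → ℝ} (hP0 : ∀ a, 0 ≤ P a) (hP1 : ∑ a, P a = 1)
    (ρ : A → A → ℝ) {w : ι → ℝ} (hw : ∀ i, 0 ≤ w i) (hw1 : ∑ i, w i = 1)
    (φ : (ι → A) → ι → A) :
    Feasible P ρ (∑ x, piPmf P x * ∑ i, w i * ρ (x i) (φ x i))
      (∑ i, w i • coordLaw P φ i) := by
  have hM : ∀ p, (∑ i, w i • coordLaw P φ i) p = ∑ i, w i * coordLaw P φ i p := fun _ => by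
    simp only [Finset.sum_apply, Pi.smul_apply, smul_eq_mul]
  have hsum : ∀ i, ∑ p, coordLaw P φ i p = 1 := fun i => by
    simpa [sum_piPmf hP1] using sum_coordLaw_mul P φ i fun _ => 1
  refine ⟨fun p => ?_, ?_, fun a => ?_, le_of_eq ?_⟩
  · rw [hM]
    exact sum_nonneg fun i _ => mul_nonneg (hw i) (coordLaw_nonneg hP0 φ i p)
  · simp only [hM]
    rw [sum_comm]
    simp only [← mul_sum, hsum, mul_one, hw1]
  · exact (fstMarginal_sum_smul w _ a).trans
      (by simp only [fstMarginal_coordLaw hP1, ← sum_mul, hw1, one_mul])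
  · simp only [hM, sum_mul]
    rw [sum_comm]
    simp only [mul_assoc, ← mul_sum, sum_coordLaw_mul]
    simp only [mul_sum]
    rw [sum_comm]
    exact sum_congr rfl fun x _ => sum_congr rfl fun i _ => by ring

theorem stmt_12_general {A : Type*} [Fintype A] (P : A → ℝ) (hP0 : ∀ a, 0 ≤ P a)
    (hP1 : ∑ a, P a = 1) (ρ : A → A → ℝ)
    (n : ℕ) (hn : 1 ≤ n) (C : Finset (Fin n → A)) (hC : C.Nonempty) :
    sInf (mi '' {W | Feasible P ρ (∑ x : Fin n → A, (∏ i, P (x i)) *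
        C.inf' hC (fun y => (1 / (n : ℝ)) * ∑ i, ρ (x i) (y i))) W})
      ≤ (1 / (n : ℝ)) * Real.log (C.card : ℝ) := by
  classical
  choose φ hφC hφ using fun x : Fin n → A =>
    C.exists_mem_eq_inf' hC fun y => (1 / (n : ℝ)) * ∑ i, ρ (x i) (y i)
  have hw1 : ∑ _i : Fin n, (1 / (n : ℝ)) = 1 := by
    simp only [sum_const, card_univ, Fintype.card_fin, nsmul_eq_mul]
    field_simp
  have hfeas := feasible_sum_smul_coordLaw hP0 hP1 ρ (fun _ => by positivity) hw1 φ
  simp only [← mul_sum, ← hφ] at hfeas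
  calc _ ≤ mi (∑ i, (1 / (n : ℝ)) • coordLaw P φ i) := by
        refine csInf_le ⟨0, ?_⟩ ⟨_, hfeas, rfl⟩
        rintro _ ⟨W, hW, rfl⟩
        exact mi_nonneg hW.1 hW.2.1
    _ ≤ ∑ i, 1 / (n : ℝ) * mi (coordLaw P φ i) :=
        mi_sum_smul_le (fun _ => by positivity) hw1 (fun i => coordLaw_nonneg hP0 φ i)
          fun i => fstMarginal_coordLaw hP1 φ i
    _ = 1 / (n : ℝ) * ∑ i, mi (coordLaw P φ i) := (mul_sum _ _ _).symm
    _ ≤ 1 / (n : ℝ) * log C.card := by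
        gcongr
        exact sum_mi_coordLaw_le_log_card hP0 hP1 hφC

/-- Converse part of Shannon's rate-distortion theorem: for any nonempty codebook
`C_n ⊆ Aⁿ` with `D = E_{Pⁿ}[min_{y∈C_n} ρ_n(X₁ⁿ,y)]`, `(1/n) log |C_n| ≥ R_S(D)`. -/
theorem stmt_12 {A : Type*} [Fintype A] (P : A → ℝ) (hP0 : ∀ a, 0 ≤ P a)
    (hP1 : ∑ a, P a = 1) (ρ : A → A → ℝ) (hρ : ∀ a b, 0 ≤ ρ a b)
    (n : ℕ) (hn : 1 ≤ n) (C : Finset (Fin n → A)) (hC : C.Nonempty) :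
    sInf (mi '' {W | Feasible P ρ (∑ x : Fin n → A, (∏ i, P (x i)) *
        C.inf' hC (fun y => (1 / (n : ℝ)) * ∑ i, ρ (x i) (y i))) W})
      ≤ (1 / (n : ℝ)) * Real.log (C.card : ℝ) :=
  stmt_12_general P hP0 hP1 ρ n hn C hC
end

section
/- Let (i_n)_{n≥1} be a sequence of random variables such that, conditionally on a sequence (p_n) with p_n ∈ (0,1], i_n is geometrically distributed with success probability p_n (so P(i_n > k) = (1-p_n)^k). Then for any ε' > 0, Σ_n P{ (1/n) log(i_n · p_n) > ε' } < ∞, and consequently limsup_{n→∞} (1/n) log(i_n p_n) ≤ 0 almost surely. -/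
open MeasureTheory

/-- Waiting-time estimate: if `i_n` is geometric with success probability `p_n`, then
for every `ε' > 0` the probabilities `P{(1/n) log(i_n p_n) > ε'}` are summable, and
consequently `limsup (1/n) log(i_n p_n) ≤ 0` almost surely. -/
theorem stmt_13 {Ω : Type*} [MeasurableSpace Ω] (μ : Measure Ω)
    [IsProbabilityMeasure μ] (i : ℕ → Ω → ℕ) (hi : ∀ n, Measurable (i n))
    (p : ℕ → ℝ) (hp0 : ∀ n, 0 < p n) (hp1 : ∀ n, p n ≤ 1)
    (hgeo : ∀ n k : ℕ, (μ {ω | k < i n ω}).toReal = (1 - p n) ^ k) :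
    (∀ ε' : ℝ, 0 < ε' →
      (∑' n : ℕ, μ {ω | ε' < (1 / (n : ℝ)) * Real.log ((i n ω : ℝ) * p n)}) ≠ ⊤) ∧
    (∀ᵐ ω ∂μ, Filter.limsup
        (fun n : ℕ => (1 / (n : ℝ)) * Real.log ((i n ω : ℝ) * p n)) Filter.atTop ≤ 0) := by
  have key : ∀ ε' : ℝ, 0 < ε' → ∀ n : ℕ,
      μ {ω | ε' < (1 / (n : ℝ)) * Real.log ((i n ω : ℝ) * p n)}
        ≤ ENNReal.ofReal (Real.exp (-ε') ^ n) := by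
    intro ε' hε' n
    rcases Nat.eq_zero_or_pos n with rfl | hn
    · simpa using prob_le_one
    have hn' : (0 : ℝ) < n := by exact_mod_cast hn
    set E : ℝ := Real.exp (ε' * n) with hE
    set k : ℕ := Nat.floor (E / p n) with hk
    have hpn := hp0 n
    have hE1 : ε' * n + 1 ≤ E := Real.add_one_le_exp _
    have hEp : E < p n * (k + 1) := by
      have h1 : E / p n < (k : ℝ) + 1 := Nat.lt_floor_add_one _
      calc E = p n * (E / p n) := by field_simp
        _ < p n * ((k : ℝ) + 1) := by
          exact mul_lt_mul_of_pos_left h1 hpn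
    have hsub : {ω | ε' < (1 / (n : ℝ)) * Real.log ((i n ω : ℝ) * p n)}
        ⊆ {ω | k < i n ω} := by
      intro ω hω
      simp only [Set.mem_setOf_eq] at hω ⊢
      have hlog : ε' * n < Real.log ((i n ω : ℝ) * p n) := by
        rw [div_mul_eq_mul_div, one_mul] at hω
        exact (lt_div_iff₀ hn').mp hω
      have hi0 : i n ω ≠ 0 := by
        intro h
        rw [h] at hlog
        simp only [Nat.cast_zero, zero_mul, Real.log_zero] at hlog
        nlinarith
      have hx0 : (0 : ℝ) < (i n ω : ℝ) * p n := by
        have : (1 : ℝ) ≤ (i n ω : ℝ) := by exact_mod_cast Nat.one_le_iff_ne_zero.mpr hi0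
        nlinarith
      have hxE : E < (i n ω : ℝ) * p n := by
        have := Real.exp_lt_exp.mpr hlog
        rwa [Real.exp_log hx0] at this
      have hki : (k : ℝ) < (i n ω : ℝ) := by
        have hkle : (k : ℝ) ≤ E / p n := Nat.floor_le (by positivity)
        have : E / p n < (i n ω : ℝ) := by
          rw [div_lt_iff₀ hpn]
          linarith
        linarith
      exact_mod_cast hki
    calc μ _ ≤ μ {ω | k < i n ω} := measure_mono hsub
      _ = ENNReal.ofReal ((1 - p n) ^ k) := by
          rw [← hgeo n k, ENNReal.ofReal_toReal (measure_ne_top μ _)]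
      _ ≤ ENNReal.ofReal (Real.exp (-ε') ^ n) := by
          apply ENNReal.ofReal_le_ofReal
          have h1 : (1 - p n) ≤ Real.exp (-p n) := by
            have := Real.add_one_le_exp (-p n); linarith
          have h2 : (1 - p n) ^ k ≤ Real.exp (-p n) ^ k :=
            pow_le_pow_left₀ (by linarith [hp1 n]) h1 k
          have h3 : Real.exp (-p n) ^ k = Real.exp (-(p n * k)) := by
            rw [← Real.exp_nat_mul]; ring_nf
          have h4 : Real.exp (-ε') ^ n = Real.exp (-(ε' * n)) := by
            rw [← Real.exp_nat_mul]; ring_nf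
          have h5 : ε' * n ≤ p n * k := by nlinarith [hp1 n]
          calc (1 - p n) ^ k ≤ Real.exp (-p n) ^ k := h2
            _ = Real.exp (-(p n * k)) := h3
            _ ≤ Real.exp (-(ε' * n)) := Real.exp_le_exp.mpr (by linarith)
            _ = Real.exp (-ε') ^ n := h4.symm
  have sum_ne : ∀ ε' : ℝ, 0 < ε' →
      (∑' n : ℕ, μ {ω | ε' < (1 / (n : ℝ)) * Real.log ((i n ω : ℝ) * p n)}) ≠ ⊤ := by
    intro ε' hε'
    have hle := ENNReal.tsum_le_tsum (key ε' hε')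
    have heq : (∑' n : ℕ, ENNReal.ofReal (Real.exp (-ε') ^ n))
        = (1 - ENNReal.ofReal (Real.exp (-ε')))⁻¹ := by
      rw [← ENNReal.tsum_geometric]
      exact tsum_congr fun n => ENNReal.ofReal_pow (Real.exp_nonneg _) n
    rw [heq] at hle
    refine ne_top_of_le_ne_top ?_ hle
    rw [ENNReal.inv_ne_top]
    have hlt : ENNReal.ofReal (Real.exp (-ε')) < 1 :=
      ENNReal.ofReal_lt_one.mpr (Real.exp_lt_one_iff.mpr (by linarith))
    exact (tsub_pos_of_lt hlt).ne'
  refine ⟨sum_ne, ?_⟩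
  have h1 : ∀ m : ℕ, ∀ᵐ ω ∂μ, ∀ᶠ n : ℕ in Filter.atTop,
      ω ∉ {ω | (1 : ℝ) / (m + 1) < (1 / (n : ℝ)) * Real.log ((i n ω : ℝ) * p n)} :=
    fun m => ae_eventually_notMem (sum_ne (1 / (m + 1)) (by positivity))
  filter_upwards [ae_all_iff.mpr h1] with ω hω
  set f : ℕ → ℝ := fun n => (1 / (n : ℝ)) * Real.log ((i n ω : ℝ) * p n) with hf
  refine le_of_forall_pos_le_add fun ε hε => ?_
  obtain ⟨m, hm⟩ := exists_nat_one_div_lt hε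
  have hev : ∀ᶠ n : ℕ in Filter.atTop, f n ≤ 1 / (m + 1) := by
    filter_upwards [hω m] with n hn
    simpa [hf, one_div] using not_lt.mp hn
  have hle : Filter.limsup f Filter.atTop ≤ 1 / (m + 1)
      ∨ Filter.limsup f Filter.atTop = 0 := by
    by_cases h : Filter.IsCoboundedUnder (· ≤ ·) Filter.atTop f
    · exact Or.inl (Filter.limsup_le_of_le h hev)
    · right
      rw [Filter.limsup_eq]
      apply Real.sInf_of_not_bddBelow
      intro hb
      apply h
      obtain ⟨b, hbl⟩ := hb
      exact ⟨b, fun a ha => hbl (by simpa [Filter.eventually_map] using ha)⟩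
  rcases hle with h | h
  · linarith
  · rw [h]; linarith
end
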